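/- arXiv:2507.09437 — 2 statements merged into one kernel-verified Lean document; each statement's English description precedes it below -/
import Mathlib

section
/- Let F : ℝ ⇒ ℝ be a cyclically quasi-monotone multi-map with full domain, let C_* = ⋂_{x∈ℝ} C^F(x), and assume C_* is a non-empty compact interval [α, β]. Then: (a) for all α < x < x', one has x ≺_F x' if F(x) ≠ {0}, and x ⪯_F x' in every case; (b) for every q > 0, the function f(x) = |x − (α+β)/2|^q is lower semi-continuous, quasi-convex, and satisfies F(x) ⊆ N_f(x) for every x ∈ ℝ. -/
/-- Cyclic quasi-monotonicity of a multi-map `F : ℝ ⇒ ℝ`. -/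
def CyclicallyQuasiMonotone1 (F : ℝ → Set ℝ) : Prop :=
  ∀ (N : ℕ) (x p : ℕ → ℝ),
    0 < N → x N = x 0 → (∀ i < N, p i ∈ F (x i)) →
    ∃ i < N, p i * (x (i + 1) - x i) ≤ 0

/-- `x 0, …, x N` is an `F`-ascending path. -/
def AscendingPath1 (F : ℝ → Set ℝ) (x : ℕ → ℝ) (N : ℕ) : Prop :=
  ∀ i < N, ∃ p ∈ F (x i), 0 < p * (x (i + 1) - x i)

/-- `a ≺_F b`: there is an `F`-ascending path from `a` to `b`. -/
def PrecF1 (F : ℝ → Set ℝ) (a b : ℝ) : Prop :=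
  ∃ (N : ℕ) (x : ℕ → ℝ), 0 < N ∧ x 0 = a ∧ x N = b ∧ AscendingPath1 F x N

/-- `a ⪯_F b`: `{w : w ≺_F a} ⊆ {w : w ≺_F b}`. -/
def PreceqF1 (F : ℝ → Set ℝ) (a b : ℝ) : Prop :=
  ∀ w, PrecF1 F w a → PrecF1 F w b

/-- The convex set `C^F(x) = {w : w ⪯_F x}`. -/
def CF1 (F : ℝ → Set ℝ) (x : ℝ) : Set ℝ :=
  {w | PreceqF1 F w x}

/-- The normal cone multi-map of `f : ℝ → ℝ`. -/
def NormalConeMap1 (f : ℝ → ℝ) (x : ℝ) : Set ℝ :=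
  {p | ∀ w, f w ≤ f x → p * (w - x) ≤ 0}

/-!
A point of `C_* = [α, β]` is `⪯_F` every point, so whatever ascends to it ascends to every
point; by cyclic quasi-monotonicity no ascending step can therefore enter `C_*`. A nonzero
`p ∈ F x` with `α < x < x'` points either towards `x'` or towards `α ∈ C_*`, which gives (a).
For (b), `p ∈ F x` does not point towards the midpoint `m` of `[α, β]`, i.e. `p (m - x) ≤ 0`,
and this already forces `p (w - x) ≤ 0` for every `w` at distance at most `|x - m|` from `m`,
which is the sublevel set of `|· - m| ^ q` through `x`.
-/

open Relation

def AscendingStep (F : ℝ → Set ℝ) (a b : ℝ) : Prop :=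
  ∃ p ∈ F a, 0 < p * (b - a)

section AscendingPaths

variable {F : ℝ → Set ℝ}

theorem AscendingPath1.snoc {x : ℕ → ℝ} {N : ℕ} {c : ℝ} (hx : AscendingPath1 F x N)
    (hc : AscendingStep F (x N) c) :
    AscendingPath1 F (fun i => if i ≤ N then x i else c) (N + 1) := by
  intro i hi
  rcases Nat.lt_or_ge i N with hiN | hiN
  · simpa [hiN.le, Nat.succ_le_of_lt hiN] using hx i hiN
  · obtain rfl : i = N := by omega
    simpa [AscendingStep] using hc

theorem transGen_of_ascendingPath1 {x : ℕ → ℝ} {N : ℕ} (hx : AscendingPath1 F x N)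
    (hN : 0 < N) : TransGen (AscendingStep F) (x 0) (x N) := by
  induction N with
  | zero => omega
  | succ N ih =>
    have hlast : AscendingStep F (x N) (x (N + 1)) := hx N N.lt_succ_self
    rcases N.eq_zero_or_pos with rfl | hN
    · exact .single hlast
    · exact .tail (ih (fun i hi => hx i (by omega)) hN) hlast

theorem precF1_iff_transGen {a b : ℝ} : PrecF1 F a b ↔ TransGen (AscendingStep F) a b := by
  constructor
  · rintro ⟨N, x, hN, rfl, rfl, hx⟩
    exact transGen_of_ascendingPath1 hx hN
  · intro h
    induction h with
    | single hab =>
      refine ⟨1, _, one_pos, rfl, rfl, AscendingPath1.snoc (x := fun _ => a) (N := 0) ?_ hab⟩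
      intro i hi
      omega
    | @tail b c _ hbc ih =>
      obtain ⟨N, x, hN, hx0, rfl, hx⟩ := ih
      exact ⟨N + 1, _, N.succ_pos, by simpa using hx0, by simp, hx.snoc hbc⟩

theorem AscendingStep.precF1 {a b : ℝ} (h : AscendingStep F a b) : PrecF1 F a b :=
  precF1_iff_transGen.2 (.single h)

theorem not_precF1_self (hF : CyclicallyQuasiMonotone1 F) (a : ℝ) : ¬ PrecF1 F a a := by
  rintro ⟨N, x, hN, hx0, hxN, hx⟩
  choose! p hpF hpos using hx
  obtain ⟨i, hi, hle⟩ := hF N x p hN (hxN.trans hx0.symm) hpF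
  exact (hpos i hi).not_ge hle

theorem PrecF1.of_mem_iInter_CF1 {w z : ℝ} (hz : z ∈ ⋂ x, CF1 F x) (h : PrecF1 F w z) (t : ℝ) :
    PrecF1 F w t :=
  Set.mem_iInter.1 hz t w h

theorem not_ascendingStep_of_mem_iInter_CF1 (hF : CyclicallyQuasiMonotone1 F) {x z : ℝ}
    (hz : z ∈ ⋂ x, CF1 F x) : ¬ AscendingStep F x z :=
  fun h => not_precF1_self hF x (h.precF1.of_mem_iInter_CF1 hz x)

theorem AscendingStep.left_or_right {y x a b : ℝ} (h : AscendingStep F y x) (hax : a < x)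
    (hxb : x < b) : AscendingStep F y a ∨ AscendingStep F y b := by
  obtain ⟨p, hp, hpos⟩ := h
  rcases le_or_gt 0 p with hp0 | hp0
  · exact .inr ⟨p, hp, by nlinarith⟩
  · exact .inl ⟨p, hp, by nlinarith⟩

theorem ascendingStep_left_or_right_of_ne_zero {p x a b : ℝ} (hp : p ∈ F x) (hp0 : p ≠ 0)
    (hax : a < x) (hxb : x < b) : AscendingStep F x a ∨ AscendingStep F x b := by
  rcases hp0.lt_or_gt with hp0 | hp0
  · exact .inl ⟨p, hp, mul_pos_of_neg_of_neg hp0 (by linarith)⟩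
  · exact .inr ⟨p, hp, mul_pos hp0 (by linarith)⟩

end AscendingPaths

theorem mul_sub_nonpos_of_abs_sub_le {p m x w : ℝ} (hpm : p * (m - x) ≤ 0)
    (hw : |w - m| ≤ |x - m|) : p * (w - x) ≤ 0 := by
  have hwm : p * (w - m) ≤ -(p * (m - x)) :=
    calc p * (w - m) ≤ |p| * |w - m| := (le_abs_self _).trans (abs_mul _ _).le
      _ ≤ |p| * |x - m| := by gcongr
      _ = |p * (m - x)| := by rw [abs_mul, abs_sub_comm]
      _ = -(p * (m - x)) := abs_of_nonpos hpm
  linarith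

theorem convex_setOf_abs_sub_rpow_le (m q ℓ : ℝ) (hq : 0 ≤ q) :
    Convex ℝ {x : ℝ | |x - m| ^ q ≤ ℓ} := by
  refine Set.OrdConnected.convex ⟨fun a ha b hb c hc => ?_⟩
  have hcm : |c - m| ≤ max |a - m| |b - m| :=
    abs_le_max_abs_abs (by linarith [hc.1]) (by linarith [hc.2])
  refine (Real.rpow_le_rpow (abs_nonneg _) hcm hq).trans ?_
  rcases max_choice |a - m| |b - m| with h | h <;> rw [h]
  exacts [ha, hb]

theorem subset_normalConeMap1_abs_sub_rpow {F : ℝ → Set ℝ} (hF : CyclicallyQuasiMonotone1 F)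
    {m q : ℝ} (hm : m ∈ ⋂ x, CF1 F x) (hq : 0 < q) (x : ℝ) :
    F x ⊆ NormalConeMap1 (fun x : ℝ => |x - m| ^ q) x := by
  intro p hp w hw
  have hpm : p * (m - x) ≤ 0 :=
    not_lt.1 fun h => not_ascendingStep_of_mem_iInter_CF1 hF hm ⟨p, hp, h⟩
  exact mul_sub_nonpos_of_abs_sub_le hpm
    ((Real.rpow_le_rpow_iff (abs_nonneg _) (abs_nonneg _) hq).1 hw)

theorem stmt12 (F : ℝ → Set ℝ) (hdom : ∀ x, (F x).Nonempty)
    (hF : CyclicallyQuasiMonotone1 F) (α β : ℝ) (hαβ : α ≤ β)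
    (hC : (⋂ x : ℝ, CF1 F x) = Set.Icc α β) :
    (∀ x x', α < x → x < x' →
      ((F x ≠ {0} → PrecF1 F x x') ∧ PreceqF1 F x x')) ∧
    (∀ q : ℝ, 0 < q →
      LowerSemicontinuous (fun x : ℝ => |x - (α + β) / 2| ^ q) ∧
      (∀ ℓ : ℝ, Convex ℝ {x : ℝ | |x - (α + β) / 2| ^ q ≤ ℓ}) ∧
      (∀ x, F x ⊆ NormalConeMap1 (fun x : ℝ => |x - (α + β) / 2| ^ q) x)) := by
  have hα : α ∈ ⋂ x, CF1 F x := hC ▸ Set.left_mem_Icc.2 hαβ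
  have hm : (α + β) / 2 ∈ ⋂ x, CF1 F x := hC ▸ ⟨by linarith, by linarith⟩
  refine ⟨fun x x' hx hxx' => ⟨fun hFx => ?_, fun w hw => ?_⟩, fun q hq => ⟨?_, ?_, ?_⟩⟩
  · obtain ⟨p, hp, hp0⟩ : ∃ p ∈ F x, p ≠ 0 := by
      by_contra! h
      exact hFx (Set.eq_singleton_iff_nonempty_unique_mem.2 ⟨hdom x, h⟩)
    rcases ascendingStep_left_or_right_of_ne_zero hp hp0 hx hxx' with h | h
    · exact h.precF1.of_mem_iInter_CF1 hα x'
    · exact h.precF1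
  · obtain ⟨y, hwy, hyx⟩ := TransGen.tail'_iff.1 (precF1_iff_transGen.1 hw)
    rcases hyx.left_or_right hx hxx' with h | h
    · exact (precF1_iff_transGen.2 (.tail' hwy h)).of_mem_iInter_CF1 hα x'
    · exact precF1_iff_transGen.2 (.tail' hwy h)
  · exact ((continuous_abs.comp (continuous_id.sub continuous_const)).rpow_const
      fun _ => .inr hq.le).lowerSemicontinuous
  · exact fun ℓ => convex_setOf_abs_sub_rpow_le _ q ℓ hq.le
  · exact subset_normalConeMap1_abs_sub_rpow hF hm hq
end

section
/- Let d ≥ 1 and let F : ℝ^d → ℝ^d be a continuous single-valued cyclically quasi-monotone map with F(x) ≠ 0 for every x ∈ ℝ^d. Then for every x ∈ ℝ^d: (i) the set {z : z ≺_F x} is non-empty and contained in the interior of C^F(x), and C^F(x) ≠ ℝ^d; (ii) for every y in the topological boundary of C^F(x), the normal cone to C^F(x) at y equals the ray {t·F(y) : t ≥ 0}; (iii) C^F(x) is unbounded. -/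
/-!
`≺_F` is a strict order: paths concatenate, and a path from a point to itself is exactly what
cyclic quasi-monotonicity forbids. By continuity of `F` both sections `{w | w ≺_F y}` and
`{w | y ≺_F w}` are open, so `C^F(x)` is closed and contains the open set `{z | z ≺_F x}`.
Moving from `y` a little in any direction `v` with `⟪F y, v⟫ < 0` leads to a point below `y`;
at a boundary point `y` of `C^F(x)` this pins the normal cone down to the ray of `F y`, and `F y`
is normal since `y ⊀_F x`. Finally every `w` has `w - s F w ≺_F w` below it, so if `C^F(x)` were
compact, finitely many open sets `{w | u ≺_F w}` with `u ∈ C^F(x)` would cover it; a minimal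
such `u` is itself covered, which is absurd.
-/

open scoped RealInnerProductSpace

/-- Cyclic quasi-monotonicity of a single-valued map `F : ℝ^d → ℝ^d`. -/
def CyclicallyQuasiMonotoneS {d : ℕ}
    (F : EuclideanSpace ℝ (Fin d) → EuclideanSpace ℝ (Fin d)) : Prop :=
  ∀ (N : ℕ) (x : ℕ → EuclideanSpace ℝ (Fin d)),
    0 < N → x N = x 0 →
    ∃ i < N, ⟪F (x i), x (i + 1) - x i⟫ ≤ 0

/-- `a ≺_F b`: there is an `F`-ascending path from `a` to `b`. -/
def PrecS {d : ℕ} (F : EuclideanSpace ℝ (Fin d) → EuclideanSpace ℝ (Fin d))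
    (a b : EuclideanSpace ℝ (Fin d)) : Prop :=
  ∃ (N : ℕ) (x : ℕ → EuclideanSpace ℝ (Fin d)),
    0 < N ∧ x 0 = a ∧ x N = b ∧ ∀ i < N, 0 < ⟪F (x i), x (i + 1) - x i⟫

/-- `a ⪯_F b`: `{w : w ≺_F a} ⊆ {w : w ≺_F b}`. -/
def PreceqS {d : ℕ} (F : EuclideanSpace ℝ (Fin d) → EuclideanSpace ℝ (Fin d))
    (a b : EuclideanSpace ℝ (Fin d)) : Prop :=
  ∀ w, PrecS F w a → PrecS F w b

/-- The convex set `C^F(x) = {w : w ⪯_F x}`. -/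
def CS {d : ℕ} (F : EuclideanSpace ℝ (Fin d) → EuclideanSpace ℝ (Fin d))
    (x : EuclideanSpace ℝ (Fin d)) : Set (EuclideanSpace ℝ (Fin d)) :=
  {w | PreceqS F w x}

open Relation Filter Topology

theorem transGen_iff_exists_seq {α : Type*} {r : α → α → Prop} {a b : α} :
    TransGen r a b ↔ ∃ (N : ℕ) (x : ℕ → α),
      0 < N ∧ x 0 = a ∧ x N = b ∧ ∀ i < N, r (x i) (x (i + 1)) := by
  constructor
  · intro h
    induction h with
    | single hab => exact ⟨1, fun i => if i = 0 then a else _, one_pos, rfl, rfl, by simpa⟩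
    | @tail b c _ hbc ih =>
      obtain ⟨N, x, hN, hx0, hxN, hx⟩ := ih
      refine ⟨N + 1, Function.update x (N + 1) c, N.succ_pos, ?_, by simp, fun i hi => ?_⟩
      · rwa [Function.update_of_ne (by omega)]
      · rw [Function.update_of_ne (by omega)]
        rcases Nat.lt_succ_iff_lt_or_eq.mp hi with hi | rfl
        · rw [Function.update_of_ne (by omega)]
          exact hx i hi
        · rwa [Function.update_self, hxN]
  · rintro ⟨N, x, hN, rfl, rfl, hx⟩
    induction N, hN using Nat.le_induction with
    | base => exact .single (hx 0 one_pos)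
    | succ n _ ih =>
      exact (ih fun i hi => hx i (by omega)).tail (hx n (by omega))

theorem isOpen_setOf_transGen_left {α : Type*} [TopologicalSpace α] {r : α → α → Prop}
    (hr : ∀ b, IsOpen {a | r a b}) (c : α) : IsOpen {a | TransGen r a c} := by
  have : {a | TransGen r a c} = ⋃ b ∈ {b | ReflTransGen r b c}, {a | r a b} := by
    ext a; simp [TransGen.head'_iff, and_comm]
  rw [this]
  exact isOpen_biUnion fun b _ => hr b

theorem isOpen_setOf_transGen_right {α : Type*} [TopologicalSpace α] {r : α → α → Prop}
    (hr : ∀ a, IsOpen {b | r a b}) (a : α) : IsOpen {c | TransGen r a c} := by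
  have : {c | TransGen r a c} = ⋃ b ∈ {b | ReflTransGen r a b}, {c | r b c} := by
    ext c; simp [TransGen.tail'_iff]
  rw [this]
  exact isOpen_biUnion fun b _ => hr b

theorem IsCompact.eq_empty_of_forall_exists_rel {α : Type*} [TopologicalSpace α]
    {r : α → α → Prop} [IsStrictOrder α r] (hr : ∀ a, IsOpen {b | r a b}) {K : Set α}
    (hK : IsCompact K) (hlt : ∀ b ∈ K, ∃ a ∈ K, r a b) : K = ∅ := by
  refine Set.eq_empty_iff_forall_notMem.mpr fun k hk => ?_
  obtain ⟨S, hSK, hSfin, hcover⟩ := hK.elim_finite_subcover_image (fun a _ => hr a)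
    fun b hb => by simpa using hlt b hb
  obtain ⟨s, hsS, -⟩ := Set.mem_iUnion₂.mp (hcover hk)
  obtain ⟨⟨m, hmS⟩, -, hmin⟩ :=
    (hSfin.wellFoundedOn (r := r)).has_min Set.univ ⟨⟨s, hsS⟩, trivial⟩
  obtain ⟨a, haS, ha⟩ := Set.mem_iUnion₂.mp (hcover (hSK hmS))
  exact hmin ⟨a, haS⟩ trivial ha

theorem exists_nonneg_smul_eq_of_inner_neg_imp {E : Type*} [NormedAddCommGroup E]
    [InnerProductSpace ℝ E] {a p : E} (ha : a ≠ 0)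
    (h : ∀ v, ⟪a, v⟫ < 0 → ⟪p, v⟫ ≤ 0) : ∃ t : ℝ, 0 ≤ t ∧ p = t • a := by
  have ha2 : 0 < ⟪a, a⟫ := real_inner_self_pos.mpr ha
  have hpa : 0 ≤ ⟪p, a⟫ := by simpa using h (-a) (by simpa using ha2)
  set t := ⟪p, a⟫ / ⟪a, a⟫
  set q := p - t • a with hq_def
  have hqa : ⟪a, q⟫ = 0 := by
    rw [inner_sub_right, real_inner_smul_right, div_mul_cancel₀ _ ha2.ne', real_inner_comm,
      sub_self]
  have hpq : ⟪p, q⟫ = ⟪q, q⟫ := by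
    conv_rhs => rw [hq_def, inner_sub_left, real_inner_smul_left, hqa, mul_zero, sub_zero]
  -- test `h` on `q - ε • a`, with `q` the component of `p` orthogonal to `a`
  have hq : ∀ ε > 0, ⟪q, q⟫ ≤ ε * ⟪p, a⟫ := by
    intro ε hε
    have := h (q - ε • a) (by
      rw [inner_sub_right, real_inner_smul_right, hqa]
      nlinarith)
    rw [inner_sub_right, real_inner_smul_right, hpq] at this
    linarith
  have hlim : Tendsto (fun ε : ℝ => ε * ⟪p, a⟫) (𝓝[>] 0) (𝓝 0) :=
    ((continuous_mul_const _).tendsto' 0 0 (zero_mul _)).mono_left nhdsWithin_le_nhds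
  have hq0 : q = 0 :=
    real_inner_self_nonpos.mp (ge_of_tendsto hlim (eventually_nhdsWithin_of_forall hq))
  exact ⟨t, div_nonneg hpa ha2.le, sub_eq_zero.mp hq0⟩

def AscStep {E : Type*} [NormedAddCommGroup E] [InnerProductSpace ℝ E] (F : E → E) (a b : E) :
    Prop :=
  0 < ⟪F a, b - a⟫

section

variable {d : ℕ} {F : EuclideanSpace ℝ (Fin d) → EuclideanSpace ℝ (Fin d)}
  {a b c v w x y z : EuclideanSpace ℝ (Fin d)}

theorem precS_iff_transGen : PrecS F a b ↔ TransGen (AscStep F) a b :=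
  (transGen_iff_exists_seq (r := AscStep F)).symm

theorem precS_of_inner_pos (h : 0 < ⟪F a, b - a⟫) : PrecS F a b :=
  precS_iff_transGen.mpr (.single h)

theorem PrecS.trans (hab : PrecS F a b) (hbc : PrecS F b c) : PrecS F a c := by
  rw [precS_iff_transGen] at *
  exact hab.trans hbc

theorem not_precS_self (hF : CyclicallyQuasiMonotoneS F) (a : EuclideanSpace ℝ (Fin d)) :
    ¬ PrecS F a a := by
  rintro ⟨N, x, hN, hx0, hxN, hx⟩
  obtain ⟨i, hi, hle⟩ := hF N x hN (hxN.trans hx0.symm)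
  exact (hx i hi).not_ge hle

theorem isOpen_setOf_precS_left (hcont : Continuous F) (b : EuclideanSpace ℝ (Fin d)) :
    IsOpen {a | PrecS F a b} := by
  simp_rw [precS_iff_transGen]
  exact isOpen_setOf_transGen_left
    (fun _ => isOpen_lt continuous_const (hcont.inner (continuous_const.sub continuous_id))) b

theorem isOpen_setOf_precS_right (a : EuclideanSpace ℝ (Fin d)) : IsOpen {b | PrecS F a b} := by
  simp_rw [precS_iff_transGen]
  exact isOpen_setOf_transGen_right
    (fun _ => isOpen_lt continuous_const (continuous_const.inner (continuous_id.sub continuous_const)))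
    a

theorem eventually_precS_add_smul (hcont : Continuous F) (hv : ⟪F y, v⟫ < 0) :
    ∀ᶠ s in 𝓝[>] (0 : ℝ), PrecS F (y + s • v) y := by
  have hg : Continuous fun s : ℝ => ⟪F (y + s • v), v⟫ := by fun_prop
  have hneg : ∀ᶠ s in 𝓝 (0 : ℝ), ⟪F (y + s • v), v⟫ < 0 :=
    hg.continuousAt.eventually_lt continuousAt_const (by simpa using hv)
  filter_upwards [nhdsWithin_le_nhds hneg, self_mem_nhdsWithin] with s hs (hs0 : 0 < s)
  refine precS_of_inner_pos ?_
  rw [sub_add_cancel_left, inner_neg_right, real_inner_smul_right]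
  nlinarith

theorem exists_precS_of_ne_zero (hcont : Continuous F) (hy : F y ≠ 0) : ∃ w, PrecS F w y := by
  have hv : ⟪F y, -F y⟫ < 0 := by simpa using pow_pos (norm_pos_iff.mpr hy) 2
  obtain ⟨s, hs⟩ := (eventually_precS_add_smul hcont hv).exists
  exact ⟨_, hs⟩

theorem self_mem_CS (x : EuclideanSpace ℝ (Fin d)) : x ∈ CS F x := fun _ => id

theorem mem_CS_of_precS (hy : y ∈ CS F x) (h : PrecS F w y) : w ∈ CS F x :=
  fun _ hu => hy _ (hu.trans h)

theorem isClosed_CS (x : EuclideanSpace ℝ (Fin d)) : IsClosed (CS F x) := by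
  have : CS F x = ⋂ u ∈ {u | ¬ PrecS F u x}, {w | PrecS F u w}ᶜ := by
    ext w
    simp [CS, PreceqS, not_imp_not]
  rw [this]
  exact isClosed_biInter fun u _ => (isOpen_setOf_precS_right u).isClosed_compl

theorem setOf_precS_subset_interior_CS (hcont : Continuous F) (x : EuclideanSpace ℝ (Fin d)) :
    {z | PrecS F z x} ⊆ interior (CS F x) :=
  interior_maximal (fun _ hz => mem_CS_of_precS (self_mem_CS x) hz)
    (isOpen_setOf_precS_left hcont x)

theorem CS_ne_univ (hF : CyclicallyQuasiMonotoneS F) (hx : F x ≠ 0) : CS F x ≠ Set.univ := by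
  intro h
  have hx' : PrecS F x (x + F x) := precS_of_inner_pos (by
    simpa [add_sub_cancel_left] using pow_pos (norm_pos_iff.mpr hx) 2)
  exact not_precS_self hF x ((h ▸ Set.mem_univ _ : x + F x ∈ CS F x) x hx')

theorem inner_sub_nonpos_of_mem_frontier_CS (hcont : Continuous F)
    (hy : y ∈ frontier (CS F x)) (hz : z ∈ CS F x) : ⟪F y, z - y⟫ ≤ 0 := by
  by_contra! h
  exact hy.2 (setOf_precS_subset_interior_CS hcont x (hz y (precS_of_inner_pos h)))

theorem normalCone_CS_of_mem_frontier (hcont : Continuous F) (hy0 : F y ≠ 0)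
    (hy : y ∈ frontier (CS F x)) :
    {p | ∀ z ∈ CS F x, ⟪p, z - y⟫ ≤ 0} = {p | ∃ t : ℝ, 0 ≤ t ∧ p = t • F y} := by
  have hyC : y ∈ CS F x := (isClosed_CS x).frontier_subset hy
  ext p
  constructor
  · intro hp
    refine exists_nonneg_smul_eq_of_inner_neg_imp hy0 fun v hv => ?_
    obtain ⟨s, hs, hs0⟩ :=
      ((eventually_precS_add_smul hcont hv).and self_mem_nhdsWithin).exists
    have := hp _ (mem_CS_of_precS hyC hs)
    rw [add_sub_cancel_left, real_inner_smul_right] at this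
    exact nonpos_of_mul_nonpos_right this hs0
  · rintro ⟨t, ht, rfl⟩ z hz
    rw [real_inner_smul_left]
    exact mul_nonpos_of_nonneg_of_nonpos ht (inner_sub_nonpos_of_mem_frontier_CS hcont hy hz)

theorem not_isBounded_CS (hcont : Continuous F) (hF : CyclicallyQuasiMonotoneS F)
    (hnv : ∀ x, F x ≠ 0) (x : EuclideanSpace ℝ (Fin d)) : ¬ Bornology.IsBounded (CS F x) := by
  intro hB
  have : IsStrictOrder _ (PrecS F) :=
    { irrefl := not_precS_self hF, trans := fun _ _ _ => PrecS.trans }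
  have hlt : ∀ w ∈ CS F x, ∃ u ∈ CS F x, PrecS F u w := fun w hw => by
    obtain ⟨u, hu⟩ := exists_precS_of_ne_zero hcont (hnv w)
    exact ⟨u, mem_CS_of_precS hw hu, hu⟩
  have hempty := (Metric.isCompact_of_isClosed_isBounded (isClosed_CS x) hB)
    |>.eq_empty_of_forall_exists_rel isOpen_setOf_precS_right hlt
  exact hempty.subset (self_mem_CS x)

end

theorem stmt15_general (d : ℕ)
    (F : EuclideanSpace ℝ (Fin d) → EuclideanSpace ℝ (Fin d))
    (hcont : Continuous F) (hF : CyclicallyQuasiMonotoneS F)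
    (hnv : ∀ x, F x ≠ 0) (x : EuclideanSpace ℝ (Fin d)) :
    ({z | PrecS F z x}.Nonempty ∧ {z | PrecS F z x} ⊆ interior (CS F x) ∧
      CS F x ≠ Set.univ) ∧
    (∀ y ∈ frontier (CS F x),
      {p | ∀ z ∈ CS F x, ⟪p, z - y⟫ ≤ 0} = {p | ∃ t : ℝ, 0 ≤ t ∧ p = t • F y}) ∧
    ¬ Bornology.IsBounded (CS F x) := by
  refine ⟨⟨exists_precS_of_ne_zero hcont (hnv x), setOf_precS_subset_interior_CS hcont x,
    CS_ne_univ hF (hnv x)⟩, fun y hy => normalCone_CS_of_mem_frontier hcont (hnv y) hy,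
    not_isBounded_CS hcont hF hnv x⟩

theorem stmt15 (d : ℕ) (hd : 1 ≤ d)
    (F : EuclideanSpace ℝ (Fin d) → EuclideanSpace ℝ (Fin d))
    (hcont : Continuous F) (hF : CyclicallyQuasiMonotoneS F)
    (hnv : ∀ x, F x ≠ 0) (x : EuclideanSpace ℝ (Fin d)) :
    ({z | PrecS F z x}.Nonempty ∧ {z | PrecS F z x} ⊆ interior (CS F x) ∧
      CS F x ≠ Set.univ) ∧
    (∀ y ∈ frontier (CS F x),
      {p | ∀ z ∈ CS F x, ⟪p, z - y⟫ ≤ 0} = {p | ∃ t : ℝ, 0 ≤ t ∧ p = t • F y}) ∧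
    ¬ Bornology.IsBounded (CS F x) :=
  stmt15_general d F hcont hF hnv x
end
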